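/- For every positive integer n ≥ 2, (n + x)/(n + x − H_n) · H((n+x)/2) < H_n, where x = (n − H_n)/(H_n − 1) — equivalently, the new upper bound on the price of stability is strictly smaller than H_n for all sufficiently large n, with the gap approaching log 2. -/

import Mathlib

/-!
With `H = H_n` and `x = (n - H)/(H - 1)` one has `n + x = H (n - 1)/(H - 1)`, so the prefactor is
`(n - 1)/(n - H)` and the argument of `Hext` is `a = (n - 1)/2 · H/(H - 1)`. Splitting the integral
defining `Hext a` at `1 - 1/a` gives `Hext a ≤ log a + 1 ≤ log n - log 2 + 1 + 1/(H - 1)`. Since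
`H_n ≥ log n + γ > log n + 1/2`, the claim reduces to `(log n)^2 = o(n)` together with
`log 2 > 1/2`: the gain `log 2 - 1/2` per unit of `n` beats the loss `O((log n)^2)`.
-/

open MeasureTheory Finset Filter

noncomputable def harmonicR (n : ℕ) : ℝ := ∑ i ∈ Finset.range n, (1 : ℝ) / (i + 1)

noncomputable def Hext (k : ℝ) : ℝ := ∫ x in (0:ℝ)..1, (1 - x ^ k) / (1 - x)

open Real

lemma harmonicR_eq_harmonic (n : ℕ) : harmonicR n = harmonic n := by
  simp [harmonicR, harmonic]

lemma log_add_half_lt_harmonicR {n : ℕ} (hn : n ≠ 0) : log n + 1 / 2 < harmonicR n := by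
  have hγ := eulerMascheroniConstant_lt_eulerMascheroniSeq' n
  rw [eulerMascheroniSeq', if_neg hn] at hγ
  rw [harmonicR_eq_harmonic]
  linarith [one_half_lt_eulerMascheroniConstant]

lemma harmonicR_le_log_add_one (n : ℕ) : harmonicR n ≤ log n + 1 := by
  rw [harmonicR_eq_harmonic, add_comm]
  exact harmonic_le_one_add_log n

section Integrand

variable {k x : ℝ}

lemma one_sub_rpow_div_one_sub_nonneg (hk : 0 ≤ k) (hx₀ : 0 ≤ x) (hx₁ : x ≤ 1) :
    0 ≤ (1 - x ^ k) / (1 - x) :=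
  div_nonneg (sub_nonneg.2 (rpow_le_one hx₀ hx₁ hk)) (sub_nonneg.2 hx₁)

lemma one_sub_rpow_div_one_sub_le_inv (hx₀ : 0 ≤ x) (hx₁ : x ≤ 1) :
    (1 - x ^ k) / (1 - x) ≤ (1 - x)⁻¹ := by
  rw [← one_div]
  exact div_le_div_of_nonneg_right (by linarith [rpow_nonneg hx₀ k]) (sub_nonneg.2 hx₁)

lemma one_sub_rpow_div_one_sub_le (hk : 1 ≤ k) (hx₀ : 0 ≤ x) (hx₁ : x ≤ 1) :
    (1 - x ^ k) / (1 - x) ≤ k := by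
  have bernoulli := one_add_mul_self_le_rpow_one_add (s := x - 1) (by linarith) hk
  rw [add_sub_cancel] at bernoulli
  exact div_le_of_le_mul₀ (sub_nonneg.2 hx₁) (by linarith) (by linarith)

end Integrand

lemma intervalIntegrable_one_sub_rpow_div_one_sub {k : ℝ} (hk : 1 ≤ k) :
    IntervalIntegrable (fun x : ℝ ↦ (1 - x ^ k) / (1 - x)) volume 0 1 := by
  have hmeas : Measurable fun x : ℝ ↦ (1 - x ^ k) / (1 - x) := by fun_prop
  refine intervalIntegrable_const.mono_fun' (g := fun _ ↦ k) hmeas.aestronglyMeasurable ?_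
  filter_upwards [ae_restrict_mem measurableSet_uIoc] with x hx
  rw [Set.uIoc_of_le zero_le_one] at hx
  rw [norm_of_nonneg (one_sub_rpow_div_one_sub_nonneg (by linarith) hx.1.le hx.2)]
  exact one_sub_rpow_div_one_sub_le hk hx.1.le hx.2

lemma integral_inv_one_sub {a : ℝ} (ha : a < 1) :
    ∫ x in (0:ℝ)..a, (1 - x)⁻¹ = -log (1 - a) := by
  rw [intervalIntegral.integral_comp_sub_left (fun x ↦ x⁻¹), sub_zero,
    integral_inv_of_pos (by linarith) one_pos, one_div, log_inv]

/-- Split at `1 - 1/k`: below it the integrand is at most `1/(1-x)`, contributing `log k`;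
above it, at most `k`, contributing `1`. -/
lemma Hext_le_log_add_one {k : ℝ} (hk : 1 ≤ k) : Hext k ≤ log k + 1 := by
  have hk₀ : 0 < k := by linarith
  set a := 1 - k⁻¹
  have ha₀ : 0 ≤ a := sub_nonneg.2 (inv_le_one_of_one_le₀ hk)
  have ha₁ : a < 1 := sub_lt_self 1 (inv_pos.2 hk₀)
  have hint := intervalIntegrable_one_sub_rpow_div_one_sub hk
  have ha : a ∈ Set.uIcc 0 1 := Set.mem_uIcc_of_le ha₀ ha₁.le
  have hint₁ := hint.mono_set (Set.uIcc_subset_uIcc Set.left_mem_uIcc ha)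
  have hint₂ := hint.mono_set (Set.uIcc_subset_uIcc ha Set.right_mem_uIcc)
  have hlow : ∫ x in (0:ℝ)..a, (1 - x ^ k) / (1 - x) ≤ log k := by
    calc ∫ x in (0:ℝ)..a, (1 - x ^ k) / (1 - x)
        ≤ ∫ x in (0:ℝ)..a, (1 - x)⁻¹ := by
          refine intervalIntegral.integral_mono_on ha₀ hint₁ ?_ fun x hx ↦
            one_sub_rpow_div_one_sub_le_inv hx.1 (hx.2.trans ha₁.le)
          refine ContinuousOn.intervalIntegrable (ContinuousOn.inv₀ (by fun_prop) fun x hx ↦ ?_)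
          rw [Set.uIcc_of_le ha₀] at hx
          linarith [hx.2]
      _ = log k := by rw [integral_inv_one_sub ha₁, sub_sub_cancel, log_inv, neg_neg]
  have hhigh : ∫ x in a..1, (1 - x ^ k) / (1 - x) ≤ 1 := by
    calc ∫ x in a..1, (1 - x ^ k) / (1 - x)
        ≤ ∫ _ in a..1, k := intervalIntegral.integral_mono_on ha₁.le hint₂
          intervalIntegrable_const fun x hx ↦
            one_sub_rpow_div_one_sub_le hk (ha₀.trans hx.1) hx.2
      _ = 1 := by simp [a, hk₀.ne']
  rw [Hext, ← intervalIntegral.integral_add_adjacent_intervals hint₁ hint₂]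
  linarith

lemma log_mul_div_two_sub_one_le {n H : ℝ} (hn : 1 < n) (hH : 1 < H) :
    log (H * (n - 1) / (2 * (H - 1))) ≤ log n - log 2 + 1 / (H - 1) := by
  have hsplit : H * (n - 1) / (2 * (H - 1)) = (n - 1) / 2 * (H / (H - 1)) := by
    field_simp
  have hH₁ : 0 < H - 1 := sub_pos.2 hH
  rw [hsplit, log_mul (by linarith) (by positivity), log_div (by linarith) two_ne_zero]
  have hn₁ : log (n - 1) ≤ log n := log_le_log (by linarith) (by linarith)
  have hH₂ : log (H / (H - 1)) ≤ 1 / (H - 1) := by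
    have h : H / (H - 1) - 1 = 1 / (H - 1) := by field_simp; ring
    exact h ▸ log_le_sub_one_of_pos (div_pos (by linarith) hH₁)
  linarith

lemma add_div_sub_one_eq {n H : ℝ} (hH : H ≠ 1) :
    n + (n - H) / (H - 1) = H * (n - 1) / (H - 1) := by
  field_simp [sub_ne_zero.2 hH]
  ring

lemma mul_div_sub_one_div_sub_eq {n H : ℝ} (hH₀ : H ≠ 0) (hH : H ≠ 1) :
    H * (n - 1) / (H - 1) / (H * (n - 1) / (H - 1) - H) = (n - 1) / (n - H) := by
  have hH₁ : H - 1 ≠ 0 := sub_ne_zero.2 hH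
  rw [show H * (n - 1) / (H - 1) - H = H * (n - H) / (H - 1) by field_simp; ring,
    div_div_div_cancel_right₀ hH₁, mul_div_mul_left _ _ hH₀]

lemma add_div_sub_one_div_mul_Hext_lt {n H : ℝ} (hL : 12 ≤ log n) (hHlo : log n + 1 / 2 < H)
    (hHhi : H ≤ log n + 1) (hgrowth : log n * (log n + 1 / 2) ≤ n / 20) :
    (n + (n - H) / (H - 1)) / (n + (n - H) / (H - 1) - H) *
      Hext ((n + (n - H) / (H - 1)) / 2) < H := by
  set L := log n
  have hn : 3000 ≤ n := by nlinarith
  have hH : 12 < H := by linarith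
  have hnH : 0 < n - 1 - L := by nlinarith
  rw [add_div_sub_one_eq (by linarith), mul_div_sub_one_div_sub_eq (by linarith) (by linarith),
    div_div, mul_comm (H - 1) 2]
  have ha : 1 ≤ H * (n - 1) / (2 * (H - 1)) := by
    rw [le_div_iff₀ (by linarith)]
    nlinarith
  have hHext : Hext (H * (n - 1) / (2 * (H - 1))) ≤ L + 1 - log 2 + 1 / 11 := by
    have h₁ := log_mul_div_two_sub_one_le (by linarith : 1 < n) (by linarith : 1 < H)
    have h₂ : 1 / (H - 1) ≤ 1 / 11 :=
      one_div_le_one_div_of_le (by norm_num : (0:ℝ) < 11) (by linarith)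
    linarith [Hext_le_log_add_one ha]
  have hkey : (n - 1) * (L + 1 - log 2 + 1 / 11) < H * (n - H) := by
    have hlog2 := log_two_gt_d9
    -- `log 2 - 1/2 - 1/11 > 1/10`, and `L (L + 1/2) ≤ n/20` is absorbed by `(n - 1)/10`.
    calc (n - 1) * (L + 1 - log 2 + 1 / 11)
        < (L + 1 / 2) * (n - 1 - L) := by nlinarith
      _ ≤ H * (n - H) := mul_le_mul hHlo.le (by linarith) hnH.le (by linarith)
  calc (n - 1) / (n - H) * Hext (H * (n - 1) / (2 * (H - 1)))
      ≤ (n - 1) / (n - H) * (L + 1 - log 2 + 1 / 11) :=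
        mul_le_mul_of_nonneg_left hHext (div_nonneg (by linarith) (by linarith))
    _ < H := by
      rw [div_mul_eq_mul_div, div_lt_iff₀ (by linarith)]
      exact hkey

lemma eventually_log_bounds :
    ∀ᶠ x : ℝ in atTop, 12 ≤ log x ∧ log x * (log x + 1 / 2) ≤ x / 20 := by
  have ho : (fun x ↦ log x ^ 2 + log x) =o[atTop] id :=
    isLittleO_pow_log_id_atTop.add isLittleO_log_id_atTop
  filter_upwards [tendsto_log_atTop.eventually_ge_atTop 12,
    ho.bound (by norm_num : (0:ℝ) < 1 / 20), eventually_ge_atTop 0] with x hL hbound hx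
  rw [norm_of_nonneg (by positivity), id, norm_of_nonneg hx] at hbound
  exact ⟨hL, by nlinarith⟩

theorem stmt19 : ∃ N : ℕ, 2 ≤ N ∧ ∀ n : ℕ, N ≤ n →
    (((n : ℝ) + ((n : ℝ) - harmonicR n) / (harmonicR n - 1)) /
        (((n : ℝ) + ((n : ℝ) - harmonicR n) / (harmonicR n - 1)) - harmonicR n)) *
      Hext (((n : ℝ) + ((n : ℝ) - harmonicR n) / (harmonicR n - 1)) / 2) < harmonicR n := by
  obtain ⟨N, hN⟩ :=
    eventually_atTop.1 (tendsto_natCast_atTop_atTop.eventually eventually_log_bounds)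
  refine ⟨max N 2, le_max_right N 2, fun n hn ↦ ?_⟩
  obtain ⟨hL, hgrowth⟩ := hN n (le_of_max_le_left hn)
  exact add_div_sub_one_div_mul_Hext_lt hL (log_add_half_lt_harmonicR (by omega))
    (harmonicR_le_log_add_one n) hgrowth
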